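/- There exists a constant c > 0 such that for all real t > 0, one has |F(⌊t⌋) − ((33 − π²)/2)·t²| ≤ c·min(t, t²). -/

import Mathlib

/-!
Write `n = ⌊t⌋₊`. Since `B n → π²/6` with tail `π²/6 - B n ≤ 2/(n+1)`, and `0 ≤ A n ≤ n`,
`F n` differs from `(33 - π²)/2 · n²` by `O(n)`. Replacing `n²` by `t²` costs another
`(t - n)(t + n) = O(min t t²)`, and `n ≤ min t t²` as well (for `t < 1`, `n = 0`).
-/

open Real

noncomputable def A (n : ℕ) : ℝ := ∑ j ∈ Finset.Icc 1 n, (1 : ℝ) / j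

noncomputable def B (n : ℕ) : ℝ := ∑ j ∈ Finset.Icc 1 n, (1 : ℝ) / j ^ 2

noncomputable def F (n : ℕ) : ℝ :=
  (33 / 2 - 3 * B n) * n ^ 2 - (21 / 2 + 3 * B n) * n + 6 * A n

open Finset

lemma B_nonneg (n : ℕ) : 0 ≤ B n :=
  sum_nonneg fun _ _ ↦ by positivity

lemma B_le_pi_sq_div_six (n : ℕ) : B n ≤ π ^ 2 / 6 :=
  sum_le_hasSum _ (fun _ _ ↦ by positivity) hasSum_zeta_two

-- The extra term `j = 0` is `1 / 0 = 0`.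
lemma B_eq_sum_range (n : ℕ) : B n = ∑ j ∈ range (n + 1), (1 : ℝ) / j ^ 2 := by
  rw [range_eq_Ico, sum_eq_sum_Ico_succ_bot (Nat.succ_pos n), B, zero_add, Nat.succ_eq_add_one,
    Ico_add_one_right_eq_Icc]
  simp

lemma pi_sq_div_six_sub_B_le (n : ℕ) : π ^ 2 / 6 - B n ≤ 2 / (n + 1) := by
  refine sub_le_iff_le_add'.2 (le_of_tendsto' hasSum_zeta_two.tendsto_sum_nat fun m ↦ ?_)
  rcases le_or_gt m (n + 1) with hm | hm
  · calc ∑ j ∈ range m, (1 : ℝ) / j ^ 2 ≤ B n := by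
          rw [B_eq_sum_range]
          exact sum_le_sum_of_subset_of_nonneg (range_subset_range.2 hm) fun _ _ _ ↦ by positivity
      _ ≤ B n + 2 / (n + 1) := le_add_of_nonneg_right (by positivity)
  · rw [← sum_range_add_sum_Ico _ hm.le, ← B_eq_sum_range, Ico_add_one_left_eq_Ioo]
    simpa using sum_Ioo_inv_sq_le (α := ℝ) n m

lemma A_nonneg (n : ℕ) : 0 ≤ A n :=
  sum_nonneg fun _ _ ↦ by positivity

lemma A_le (n : ℕ) : A n ≤ n := by
  calc A n ≤ ∑ _j ∈ Icc 1 n, (1 : ℝ) :=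
        sum_le_sum fun j hj ↦ div_le_one_of_le₀ (by exact_mod_cast (mem_Icc.1 hj).1) (by positivity)
    _ = n := by simp

lemma Nat.floor_le_min_self_sq {t : ℝ} (ht : 0 ≤ t) : (⌊t⌋₊ : ℝ) ≤ min t (t ^ 2) := by
  rcases lt_or_ge t 1 with ht1 | ht1
  · simp [Nat.floor_eq_zero.2 ht1, ht]
  · exact le_min (Nat.floor_le ht) ((Nat.floor_le ht).trans (by nlinarith))

lemma sq_sub_floor_sq_le {t : ℝ} (ht : 0 ≤ t) : t ^ 2 - ⌊t⌋₊ ^ 2 ≤ 2 * min t (t ^ 2) := by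
  have hfloor := Nat.floor_le ht
  have hfrac : t - ⌊t⌋₊ ≤ min 1 t := le_min (by linarith [Nat.lt_floor_add_one t]) (by simp)
  calc t ^ 2 - ⌊t⌋₊ ^ 2 = (t - ⌊t⌋₊) * (t + ⌊t⌋₊) := by ring
    _ ≤ min 1 t * (2 * t) := mul_le_mul hfrac (by linarith) (by linarith) (by positivity)
    _ = 2 * min t (t ^ 2) := by
        rw [min_mul_of_nonneg _ _ (by positivity), mul_min_of_nonneg _ _ zero_le_two]
        congr 1 <;> ring

lemma abs_F_sub_le (n : ℕ) : |F n - (33 - π ^ 2) / 2 * n ^ 2| ≤ 20 * (n : ℝ) := by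
  have hn : (0 : ℝ) ≤ n := n.cast_nonneg
  have hB := B_le_pi_sq_div_six n
  have hpi : π ^ 2 < 16 := by nlinarith [pi_pos, pi_lt_four]
  have htail : (π ^ 2 / 6 - B n) * n ^ 2 ≤ 2 * (n : ℝ) :=
    calc (π ^ 2 / 6 - B n) * (n : ℝ) ^ 2 ≤ 2 / (n + 1) * n ^ 2 := by
          gcongr; exact pi_sq_div_six_sub_B_le n
      _ ≤ 2 * (n : ℝ) := by
          rw [div_mul_eq_mul_div, div_le_iff₀ (by positivity)]; nlinarith
  have hdecomp : F n - (33 - π ^ 2) / 2 * n ^ 2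
      = 3 * ((π ^ 2 / 6 - B n) * n ^ 2) - (21 / 2 + 3 * B n) * n + 6 * A n := by
    rw [F]; ring
  rw [hdecomp, abs_le]
  constructor <;> nlinarith [B_nonneg n, A_nonneg n, A_le n]

theorem stmt14 :
    ∃ c > 0, ∀ t : ℝ, 0 < t →
      |F ⌊t⌋₊ - (33 - Real.pi ^ 2) / 2 * t ^ 2| ≤ c * min t (t ^ 2) := by
  refine ⟨44, by norm_num, fun t ht ↦ ?_⟩
  have hcoeff : 0 ≤ (33 - π ^ 2) / 2 ∧ (33 - π ^ 2) / 2 ≤ 12 := by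
    constructor <;> nlinarith [pi_gt_three, pi_lt_four]
  have hfloor_sq : (⌊t⌋₊ : ℝ) ^ 2 ≤ t ^ 2 := by gcongr; exact Nat.floor_le ht.le
  calc |F ⌊t⌋₊ - (33 - π ^ 2) / 2 * t ^ 2|
      ≤ |F ⌊t⌋₊ - (33 - π ^ 2) / 2 * ⌊t⌋₊ ^ 2| + (33 - π ^ 2) / 2 * (t ^ 2 - ⌊t⌋₊ ^ 2) := by
        refine (abs_sub_le _ ((33 - π ^ 2) / 2 * ⌊t⌋₊ ^ 2) _).trans_eq ?_
        rw [← mul_sub, abs_mul, abs_sub_comm ((⌊t⌋₊ : ℝ) ^ 2), abs_of_nonneg hcoeff.1,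
          abs_of_nonneg (sub_nonneg.2 hfloor_sq)]
    _ ≤ 20 * min t (t ^ 2) + 12 * (2 * min t (t ^ 2)) := by
        gcongr
        · exact (abs_F_sub_le _).trans (by gcongr; exact Nat.floor_le_min_self_sq ht.le)
        · exact hcoeff.2
        · exact sq_sub_floor_sq_le ht.le
    _ = 44 * min t (t ^ 2) := by ring
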